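/- Let G=(V,E) be an undirected connected simple locally finite graph, let x,y be neighboring vertices, and suppose κ(x,y) ≥ k for some k > 0. Then ♯(x,y) ≥ ⌈k·(d_x∨d_y)⌉, where d_x∨d_y = max{d_x,d_y} and ⌈a⌉ denotes the least integer greater than or equal to a. -/
import Mathlib


open SimpleGraph Finset

variable {V : Type*}

/-- The probability measure attached to a vertex `x`: uniform on its neighbors. -/
noncomputable def nbrMeasure (G : SimpleGraph V) [G.LocallyFinite] [DecidableRel G.Adj]
    (x z : V) : ℝ :=
  if G.Adj x z then ((G.degree x : ℝ))⁻¹ else 0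

/-- A coupling (transfer plan) between the measures `m_x` and `m_y`. -/
def IsCoupling (G : SimpleGraph V) [G.LocallyFinite] [DecidableRel G.Adj]
    (x y : V) (ξ : V → V → ℝ) : Prop :=
  (∀ u v, 0 ≤ ξ u v) ∧
  (∀ u v, ξ u v ≠ 0 → G.Adj x u ∧ G.Adj y v) ∧
  (∀ u, ∑ v ∈ G.neighborFinset y, ξ u v = nbrMeasure G x u) ∧
  (∀ v, ∑ u ∈ G.neighborFinset x, ξ u v = nbrMeasure G y v)

/-- The transportation distance `W₁(m_x, m_y)`. -/
noncomputable def W1 (G : SimpleGraph V) [G.LocallyFinite] [DecidableRel G.Adj]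
    (x y : V) : ℝ :=
  sInf { c : ℝ | ∃ ξ : V → V → ℝ, IsCoupling G x y ξ ∧
    c = ∑ u ∈ G.neighborFinset x, ∑ v ∈ G.neighborFinset y, (G.dist u v : ℝ) * ξ u v }

/-- Ollivier's Ricci curvature `κ(x,y) = 1 - W₁(m_x,m_y)/d(x,y)`. -/
noncomputable def ricci (G : SimpleGraph V) [G.LocallyFinite] [DecidableRel G.Adj]
    (x y : V) : ℝ :=
  1 - W1 G x y / (G.dist x y : ℝ)

/-- Positive part of a real number: `a₊ = max a 0`. -/
noncomputable def posPart' (a : ℝ) : ℝ := max a 0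

/-- `♯(x,y)`: the number of common neighbors of `x` and `y`. -/
def triangles (G : SimpleGraph V) [G.LocallyFinite] [DecidableEq V] (x y : V) : ℕ :=
  (G.neighborFinset x ∩ G.neighborFinset y).card

lemma nbrMeasure_nonneg (G : SimpleGraph V) [G.LocallyFinite] [DecidableRel G.Adj]
    (x z : V) : 0 ≤ nbrMeasure G x z := by
  unfold nbrMeasure; split <;> positivity

lemma sum_nbrMeasure (G : SimpleGraph V) [G.LocallyFinite] [DecidableRel G.Adj]
    (x : V) (hx : 0 < G.degree x) :
    ∑ z ∈ G.neighborFinset x, nbrMeasure G x z = 1 := by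
  have h : ∀ z ∈ G.neighborFinset x, nbrMeasure G x z = (G.degree x : ℝ)⁻¹ := by
    intro z hz
    simp [nbrMeasure, (G.mem_neighborFinset x z).1 hz]
  rw [Finset.sum_congr rfl h, Finset.sum_const, G.card_neighborFinset_eq_degree,
    nsmul_eq_mul]
  have : (G.degree x : ℝ) ≠ 0 := by positivity
  field_simp

lemma coupling_cost_bound (G : SimpleGraph V) [G.LocallyFinite] [DecidableRel G.Adj]
    [DecidableEq V] (hG : G.Connected) (x y : V) (hxy : G.Adj x y)
    (ξ : V → V → ℝ) (hξ : IsCoupling G x y ξ) :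
    1 - (triangles G x y : ℝ) / ((max (G.degree x) (G.degree y) : ℕ) : ℝ) ≤
      ∑ u ∈ G.neighborFinset x, ∑ v ∈ G.neighborFinset y, (G.dist u v : ℝ) * ξ u v := by
  obtain ⟨hpos, hsupp, hmx, hmy⟩ := hξ
  have hdx : 0 < G.degree x := by
    rw [← G.card_neighborFinset_eq_degree, Finset.card_pos]
    exact ⟨y, (G.mem_neighborFinset x y).2 hxy⟩
  have hdy : 0 < G.degree y := by
    rw [← G.card_neighborFinset_eq_degree, Finset.card_pos]
    exact ⟨x, (G.mem_neighborFinset y x).2 hxy.symm⟩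
  have hDpos : (0:ℝ) < ((max (G.degree x) (G.degree y) : ℕ) : ℝ) := by
    exact_mod_cast lt_of_lt_of_le hdx (le_max_left _ _)
  -- total mass is 1
  have htot : ∑ u ∈ G.neighborFinset x, ∑ v ∈ G.neighborFinset y, ξ u v = 1 := by
    rw [Finset.sum_congr rfl (fun u _ => hmx u)]
    exact sum_nbrMeasure G x hdx
  -- diagonal entries are small
  have hdiagle : ∀ u ∈ G.neighborFinset x ∩ G.neighborFinset y,
      ξ u u ≤ ((max (G.degree x) (G.degree y) : ℕ) : ℝ)⁻¹ := by
    intro u hu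
    obtain ⟨hux, huy⟩ := Finset.mem_inter.1 hu
    have h1 : ξ u u ≤ (G.degree x : ℝ)⁻¹ := by
      have := Finset.single_le_sum (f := fun v => ξ u v) (fun v _ => hpos u v) huy
      rw [hmx u] at this
      simpa [nbrMeasure, (G.mem_neighborFinset x u).1 hux] using this
    have h2 : ξ u u ≤ (G.degree y : ℝ)⁻¹ := by
      have := Finset.single_le_sum (f := fun w => ξ w u) (fun w _ => hpos w u) hux
      rw [hmy u] at this
      simpa [nbrMeasure, (G.mem_neighborFinset y u).1 huy] using this
    rcases max_choice (G.degree x) (G.degree y) with h | h <;> rw [h]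
    · exact h1
    · exact h2
  have hdiag : ∑ u ∈ G.neighborFinset x ∩ G.neighborFinset y, ξ u u ≤
      (triangles G x y : ℝ) / ((max (G.degree x) (G.degree y) : ℕ) : ℝ) := by
    calc ∑ u ∈ G.neighborFinset x ∩ G.neighborFinset y, ξ u u
        ≤ ∑ _u ∈ G.neighborFinset x ∩ G.neighborFinset y,
            ((max (G.degree x) (G.degree y) : ℕ) : ℝ)⁻¹ := Finset.sum_le_sum hdiagle
      _ = (triangles G x y : ℝ) * ((max (G.degree x) (G.degree y) : ℕ) : ℝ)⁻¹ := by
          rw [Finset.sum_const, nsmul_eq_mul]; rfl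
      _ = (triangles G x y : ℝ) / ((max (G.degree x) (G.degree y) : ℕ) : ℝ) := by
          rw [div_eq_mul_inv]
  -- the indicator sum
  have hind : ∑ u ∈ G.neighborFinset x, ∑ v ∈ G.neighborFinset y,
      (if u = v then (0:ℝ) else 1) * ξ u v
      = 1 - ∑ u ∈ G.neighborFinset x ∩ G.neighborFinset y, ξ u u := by
    have hrow : ∀ u ∈ G.neighborFinset x,
        ∑ v ∈ G.neighborFinset y, (if u = v then (0:ℝ) else 1) * ξ u v
        = (∑ v ∈ G.neighborFinset y, ξ u v) -
            (if u ∈ G.neighborFinset y then ξ u u else 0) := by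
      intro u _
      rw [← Finset.sum_ite_eq (G.neighborFinset y) u (fun v => ξ u v),
        ← Finset.sum_sub_distrib]
      apply Finset.sum_congr rfl
      intro v _
      by_cases h : u = v <;> simp [h]
    rw [Finset.sum_congr rfl hrow, Finset.sum_sub_distrib, htot,
      Finset.sum_ite_mem]
  -- pointwise bound
  have hptw : ∀ u ∈ G.neighborFinset x, ∀ v ∈ G.neighborFinset y,
      (if u = v then (0:ℝ) else 1) * ξ u v ≤ (G.dist u v : ℝ) * ξ u v := by
    intro u _ v _
    by_cases h : u = v
    · simp [h, SimpleGraph.dist_self]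
    · have h1 : 1 ≤ (G.dist u v : ℝ) := by exact_mod_cast hG.pos_dist_of_ne h
      rw [if_neg h]
      exact mul_le_mul_of_nonneg_right h1 (hpos u v)
  calc 1 - (triangles G x y : ℝ) / ((max (G.degree x) (G.degree y) : ℕ) : ℝ)
      ≤ 1 - ∑ u ∈ G.neighborFinset x ∩ G.neighborFinset y, ξ u u := by linarith
    _ = ∑ u ∈ G.neighborFinset x, ∑ v ∈ G.neighborFinset y,
          (if u = v then (0:ℝ) else 1) * ξ u v := hind.symm
    _ ≤ ∑ u ∈ G.neighborFinset x, ∑ v ∈ G.neighborFinset y, (G.dist u v : ℝ) * ξ u v :=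
        Finset.sum_le_sum fun u hu => Finset.sum_le_sum fun v hv => hptw u hu v hv

/-- If `κ(x,y) ≥ k > 0` for neighbors `x ∼ y`, then
`♯(x,y) ≥ ⌈k·(d_x∨d_y)⌉`. -/
theorem triangles_lower_bound_of_ricci (G : SimpleGraph V) [G.LocallyFinite]
    [DecidableRel G.Adj] [DecidableEq V]
    (hG : G.Connected) (x y : V) (hxy : G.Adj x y)
    (k : ℝ) (hk : 0 < k) (hκ : ricci G x y ≥ k) :
    (triangles G x y : ℤ) ≥ ⌈k * ((max (G.degree x) (G.degree y) : ℕ) : ℝ)⌉ := by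
  have hdx : 0 < G.degree x := by
    rw [← G.card_neighborFinset_eq_degree, Finset.card_pos]
    exact ⟨y, (G.mem_neighborFinset x y).2 hxy⟩
  have hdy : 0 < G.degree y := by
    rw [← G.card_neighborFinset_eq_degree, Finset.card_pos]
    exact ⟨x, (G.mem_neighborFinset y x).2 hxy.symm⟩
  have hDpos : (0:ℝ) < ((max (G.degree x) (G.degree y) : ℕ) : ℝ) := by
    exact_mod_cast lt_of_lt_of_le hdx (le_max_left _ _)
  -- the product coupling shows the set is nonempty
  have hcoup : IsCoupling G x y (fun u v => nbrMeasure G x u * nbrMeasure G y v) := by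
    refine ⟨fun u v => mul_nonneg (nbrMeasure_nonneg G x u) (nbrMeasure_nonneg G y v),
      ?_, ?_, ?_⟩
    · intro u v h
      constructor
      · by_contra hA; exact h (by simp [nbrMeasure, hA])
      · by_contra hA; exact h (by simp [nbrMeasure, hA])
    · intro u
      rw [← Finset.mul_sum, sum_nbrMeasure G y hdy, mul_one]
    · intro v
      rw [← Finset.sum_mul, sum_nbrMeasure G x hdx, one_mul]
  have hne : { c : ℝ | ∃ ξ : V → V → ℝ, IsCoupling G x y ξ ∧
      c = ∑ u ∈ G.neighborFinset x, ∑ v ∈ G.neighborFinset y,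
        (G.dist u v : ℝ) * ξ u v }.Nonempty :=
    ⟨_, fun u v => nbrMeasure G x u * nbrMeasure G y v, hcoup, rfl⟩
  have hW : 1 - (triangles G x y : ℝ) / ((max (G.degree x) (G.degree y) : ℕ) : ℝ)
      ≤ W1 G x y := by
    apply le_csInf hne
    rintro c ⟨ξ, hξ, rfl⟩
    exact coupling_cost_bound G hG x y hxy ξ hξ
  have hdist : G.dist x y = 1 := SimpleGraph.dist_eq_one_iff_adj.2 hxy
  have hric : ricci G x y = 1 - W1 G x y := by
    rw [ricci, hdist]; norm_num
  rw [hric] at hκ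
  have hfrac : k ≤ (triangles G x y : ℝ) / ((max (G.degree x) (G.degree y) : ℕ) : ℝ) := by
    linarith
  have hk' : k * ((max (G.degree x) (G.degree y) : ℕ) : ℝ) ≤ (triangles G x y : ℝ) := by
    rw [← le_div_iff₀ hDpos]; exact hfrac
  rw [ge_iff_le, Int.ceil_le]
  push_cast at hk' ⊢
  exact hk'
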